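/- Let D be a connected graph and b ∈ V(D). With 𝒦 the set of cliques of D \ {b} whose canonical separation has maximal side A(K), define β(D,b) = ⋂_{K ∈ 𝒦} (B(K) ∪ C(K)). Then b ∈ β(D,b), and for every connected component F of D \ β(D,b) there exists K ∈ 𝒦 with F ⊆ A(K); in particular N(F) is a clique. -/

import Mathlib

/-- The component `B(K)` of `D \ K` containing `b`. -/
def bComp {V : Type*} (G : SimpleGraph V) (b : V) (K : Set V) : Set V :=
  {v : V | ∃ (hv : v ∈ Kᶜ) (hb : b ∈ Kᶜ), (G.induce Kᶜ).Reachable ⟨b, hb⟩ ⟨v, hv⟩}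

/-- `C(K) = N(B(K))`. -/
def cSet {V : Type*} (G : SimpleGraph V) (b : V) (K : Set V) : Set V :=
  {v : V | v ∉ bComp G b K ∧ ∃ u ∈ bComp G b K, G.Adj u v}

/-- `A(K) = V(D) \ (B(K) ∪ C(K))`. -/
def aSet {V : Type*} (G : SimpleGraph V) (b : V) (K : Set V) : Set V :=
  (bComp G b K ∪ cSet G b K)ᶜ

/-- `K` is a clique not containing `b` whose canonical separation has `A(K)` maximal. -/
def IsMaxSep {V : Type*} (G : SimpleGraph V) (b : V) (K : Set V) : Prop :=
  G.IsClique K ∧ b ∉ K ∧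
    ∀ K' : Set V, G.IsClique K' → b ∉ K' → ¬ (aSet G b K ⊂ aSet G b K')

/-- The central bag `β(D,b) = ⋂_{K maximal} (B(K) ∪ C(K))`. -/
def betaSet {V : Type*} (G : SimpleGraph V) (b : V) : Set V :=
  {v : V | ∀ K : Set V, IsMaxSep G b K → v ∈ bComp G b K ∪ cSet G b K}

/-!
The separator `C(K)` of a maximal `K` lies in `β(D,b)`: if `x ∈ C(K)` lay in `A(K')` for another
maximal `K'`, then the clique `C(K)` would miss `B(K')` (a vertex of `B(K')` adjacent to `x` would
put `x` into `B(K') ∪ C(K')`), so the connected set `B(K')` would stay inside `B(K)`, giving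
`A(K) ⊊ A(K')` (strict because of `x`), against maximality of `K`.
A component `F` of `D \ β(D,b)` meets some `A(K)`, and then cannot leave `A(K)`, since `A(K)` is
only exited through `C(K) ⊆ β(D,b)`; and `N(F) ⊆ β(D,b) ∩ N(A(K)) ⊆ C(K)`, a clique.
-/

theorem SimpleGraph.Reachable.mem_of_adj_closed {V : Type*} {G : SimpleGraph V} {S : Set V}
    {x y : V} (h : G.Reachable x y) (hx : x ∈ S)
    (hS : ∀ ⦃u v⦄, G.Adj u v → u ∈ S → v ∈ S) : y ∈ S := by
  obtain ⟨p⟩ := h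
  by_contra hy
  obtain ⟨d, -, hd, hd'⟩ := p.exists_boundary_dart S hx hy
  exact hd' (hS d.adj hd)

section Separation

variable {V : Type*} {G : SimpleGraph V} {b : V} {K K' : Set V}

theorem mem_bComp_self (hb : b ∉ K) : b ∈ bComp G b K :=
  ⟨hb, hb, .refl _⟩

theorem mem_bComp_of_adj {u v : V} (hu : u ∈ bComp G b K) (huv : G.Adj u v) (hv : v ∉ K) :
    v ∈ bComp G b K := by
  obtain ⟨_, hb, r⟩ := hu
  exact ⟨hv, hb, r.trans (SimpleGraph.Adj.reachable (G := G.induce Kᶜ) huv)⟩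

theorem mem_bComp_union_cSet_of_adj {u v : V} (hu : u ∈ bComp G b K) (huv : G.Adj u v) :
    v ∈ bComp G b K ∪ cSet G b K :=
  or_iff_not_imp_left.2 fun hv => ⟨hv, u, hu, huv⟩

theorem cSet_subset : cSet G b K ⊆ K := fun _ ⟨hvB, _, hu, huv⟩ =>
  not_not.1 fun hv => hvB (mem_bComp_of_adj hu huv hv)

theorem mem_aSet_of_adj {u v : V} (hu : u ∈ aSet G b K) (huv : G.Adj u v)
    (hv : v ∉ cSet G b K) : v ∈ aSet G b K := by
  rintro (hvB | hvC)
  · exact hu (mem_bComp_union_cSet_of_adj hvB huv.symm)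
  · exact hv hvC

theorem bComp_subset_of_adj_closed {S : Set V} (hb : b ∈ S)
    (hS : ∀ ⦃u v⦄, G.Adj u v → u ∈ bComp G b K → u ∈ S → v ∉ K → v ∈ S) :
    bComp G b K ⊆ S := by
  rintro v ⟨hvK, hbK, r⟩
  refine (r.mem_of_adj_closed (S := {x | x.1 ∈ bComp G b K ∧ x.1 ∈ S})
    ⟨mem_bComp_self hbK, hb⟩ ?_).2
  rintro ⟨u, _⟩ ⟨w, hwK⟩ huw ⟨huB, huS⟩
  exact ⟨mem_bComp_of_adj huB huw hwK, hS huw huB huS hwK⟩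

theorem bComp_subset_bComp_of_disjoint_cSet (hK : b ∉ K)
    (hdisj : Disjoint (bComp G b K') (cSet G b K)) : bComp G b K' ⊆ bComp G b K := by
  refine bComp_subset_of_adj_closed (mem_bComp_self hK) fun u v huv huB' huB hvK' => ?_
  refine (mem_bComp_union_cSet_of_adj huB huv).resolve_right fun hvC => ?_
  exact hdisj.ne_of_mem (mem_bComp_of_adj huB' huv hvK') hvC rfl

theorem aSet_subset_aSet_of_bComp_subset (h : bComp G b K' ⊆ bComp G b K) :
    aSet G b K ⊆ aSet G b K' := by
  refine Set.compl_subset_compl.2 ?_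
  rintro v (hvB | ⟨-, u, huB, huv⟩)
  · exact Or.inl (h hvB)
  · exact mem_bComp_union_cSet_of_adj (h huB) huv

theorem IsMaxSep.disjoint_cSet_aSet (hK : IsMaxSep G b K) (hK' : IsMaxSep G b K') :
    Disjoint (cSet G b K) (aSet G b K') := by
  refine Set.disjoint_left.2 fun x hxC hxA' => ?_
  have hdisj : Disjoint (bComp G b K') (cSet G b K) := by
    refine Set.disjoint_left.2 fun y hyB' hyC => ?_
    have hyx : y ≠ x := by
      rintro rfl
      exact hxA' (Or.inl hyB')
    exact hxA' (mem_bComp_union_cSet_of_adj hyB' (hK.1 (cSet_subset hyC) (cSet_subset hxC) hyx))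
  have hAA' := aSet_subset_aSet_of_bComp_subset (bComp_subset_bComp_of_disjoint_cSet hK.2.1 hdisj)
  exact hK.2.2 K' hK'.1 hK'.2.1 ⟨hAA', fun h => h hxA' (Or.inr hxC)⟩

theorem IsMaxSep.cSet_subset_betaSet (hK : IsMaxSep G b K) : cSet G b K ⊆ betaSet G b :=
  fun _ hxC _ hK' => not_not.1 fun hxA' => (hK.disjoint_cSet_aSet hK').ne_of_mem hxC hxA' rfl

end Separation

theorem stmt_11_general {V : Type*} (G : SimpleGraph V) (b : V) :
    b ∈ betaSet G b ∧
      ∀ F : Set V, F.Nonempty → F ⊆ (betaSet G b)ᶜ → (G.induce F).Connected →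
        (∀ u ∈ F, ∀ v : V, G.Adj u v → v ∉ betaSet G b → v ∈ F) →
        (∃ K : Set V, IsMaxSep G b K ∧ F ⊆ aSet G b K) ∧
          G.IsClique {v : V | v ∉ F ∧ ∃ u ∈ F, G.Adj u v} := by
  refine ⟨fun K hK => Or.inl (mem_bComp_self hK.2.1), fun F ⟨f, hf⟩ hFβ hFconn hFclosed => ?_⟩
  obtain ⟨K, hK, hfA⟩ : ∃ K, IsMaxSep G b K ∧ f ∈ aSet G b K := by
    simpa [betaSet, aSet] using hFβ hf
  have hFA : F ⊆ aSet G b K := fun v hv =>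
    (hFconn.preconnected ⟨f, hf⟩ ⟨v, hv⟩).mem_of_adj_closed (S := {x : F | x.1 ∈ aSet G b K}) hfA
      fun u w huw huA => mem_aSet_of_adj huA huw fun hwC => hFβ w.2 (hK.cSet_subset_betaSet hwC)
  have hNF : {v | v ∉ F ∧ ∃ u ∈ F, G.Adj u v} ⊆ cSet G b K := by
    rintro v ⟨hvF, u, huF, huv⟩
    have hvβ : v ∈ betaSet G b := not_not.1 fun h => hvF (hFclosed u huF v huv h)
    exact (hvβ K hK).resolve_left fun hvB => hFA huF (mem_bComp_union_cSet_of_adj hvB huv.symm)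
  exact ⟨⟨K, hK, hFA⟩, hK.1.subset (hNF.trans cSet_subset)⟩

/-- `b ∈ β(D,b)`, and every connected component `F` of `D \ β(D,b)` satisfies
`F ⊆ A(K)` for some maximal `K`; in particular `N(F)` is a clique. -/
theorem stmt_11 {V : Type*} (G : SimpleGraph V) (hG : G.Connected) (b : V) :
    b ∈ betaSet G b ∧
      ∀ F : Set V, F.Nonempty → F ⊆ (betaSet G b)ᶜ → (G.induce F).Connected →
        (∀ u ∈ F, ∀ v : V, G.Adj u v → v ∉ betaSet G b → v ∈ F) →
        (∃ K : Set V, IsMaxSep G b K ∧ F ⊆ aSet G b K) ∧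
          G.IsClique {v : V | v ∉ F ∧ ∃ u ∈ F, G.Adj u v} :=
  stmt_11_general G b
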